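/- Let l = k(√α) with char k ≠ 2, and let l ⊗_k C_{2α} where C_{2α} = k⟨x,y⟩/(x² − α, y² − α, xy + yx − 2α). Then l ⊗_k C_{2α} is isomorphic to lQ_{<2}, the truncated path algebra of the round-trip quiver Q (two vertices u, v with arrows R : u → v and S : v → u) modulo paths of length ≥ 2, via x ↦ √α·u − √α·v + R + S and y ↦ √α·u − √α·v. -/

import Mathlib

/-!
Put `D = u - v` and `N = R + S`. Then `D² = 1`, `N² = 0` and `DN + ND = 0`, so `x ↦ √α D + N`,
`y ↦ √α D` respects the relations of `C_{2α}` and induces an `l`-algebra map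
`l ⊗ C_{2α} → lQ_{<2}`. Its image contains `D` and `N`, hence, `2` being invertible,
`u = (1 + D)/2`, `v = 1 - u`, `R = vN` and `S = uN`: the map is onto. As `C_{2α}` is spanned by
`1, x, y, xy`, the source has dimension at most `4 = dim lQ_{<2}` over the field `l` (`α` is
not a square), so the surjection is an isomorphism.
-/

set_option maxHeartbeats 1000000

open FreeAlgebra Polynomial TensorProduct

/-- Relations for `C_q = k⟨x,y⟩/(x² − α, y² − β, xy + yx − q)`. -/
inductive CRel (k : Type*) [Field k] (α β q : k) :
    FreeAlgebra k (Fin 2) → FreeAlgebra k (Fin 2) → Prop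
  | xx : CRel k α β q (ι k 0 * ι k 0) (algebraMap k _ α)
  | yy : CRel k α β q (ι k 1 * ι k 1) (algebraMap k _ β)
  | mix : CRel k α β q (ι k 0 * ι k 1 + ι k 1 * ι k 0) (algebraMap k _ q)

namespace CRel

variable (k : Type*) [Field k] (α β q : k)

abbrev genX : RingQuot (CRel k α β q) := RingQuot.mkAlgHom k (CRel k α β q) (ι k 0)

abbrev genY : RingQuot (CRel k α β q) := RingQuot.mkAlgHom k (CRel k α β q) (ι k 1)

lemma genX_mul_genX : genX k α β q * genX k α β q = algebraMap k _ α := by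
  rw [← map_mul, RingQuot.mkAlgHom_rel k CRel.xx, AlgHom.commutes]

lemma genY_mul_genY : genY k α β q * genY k α β q = algebraMap k _ β := by
  rw [← map_mul, RingQuot.mkAlgHom_rel k CRel.yy, AlgHom.commutes]

lemma genY_mul_genX :
    genY k α β q * genX k α β q = algebraMap k _ q - genX k α β q * genY k α β q := by
  rw [eq_sub_iff_add_eq, add_comm, ← map_mul, ← map_mul, ← map_add,
    RingQuot.mkAlgHom_rel k CRel.mix, AlgHom.commutes]

/-- The span of `1, x, y, xy` is stable under left multiplication by the generators `x, y`. -/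
lemma span_range_eq_top :
    Submodule.span k (Set.range ![1, genX k α β q, genY k α β q, genX k α β q * genY k α β q])
      = ⊤ := by
  set x := genX k α β q
  set y := genY k α β q
  set V := Submodule.span k (Set.range ![1, x, y, x * y])
  have h1 : (1 : RingQuot (CRel k α β q)) ∈ V := Submodule.subset_span ⟨0, rfl⟩
  have hx : x ∈ V := Submodule.subset_span ⟨1, rfl⟩
  have hy : y ∈ V := Submodule.subset_span ⟨2, rfl⟩
  have hxy : x * y ∈ V := Submodule.subset_span ⟨3, rfl⟩
  have hc : ∀ c : k, algebraMap k _ c ∈ V := fun c => by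
    rw [Algebra.algebraMap_eq_smul_one]; exact V.smul_mem c h1
  have hxV : V ≤ V.comap (LinearMap.mulLeft k x) := by
    refine Submodule.span_le.2 (Set.range_subset_iff.2 fun j => ?_)
    fin_cases j <;> simp only [Fin.reduceFinMk, Matrix.cons_val, SetLike.mem_coe,
      Submodule.mem_comap, LinearMap.mulLeft_apply, mul_one]
    · exact hx
    · rw [genX_mul_genX]; exact hc α
    · exact hxy
    · rw [← mul_assoc, genX_mul_genX, ← Algebra.smul_def]; exact V.smul_mem α hy
  have hyV : V ≤ V.comap (LinearMap.mulLeft k y) := by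
    refine Submodule.span_le.2 (Set.range_subset_iff.2 fun j => ?_)
    fin_cases j <;> simp only [Fin.reduceFinMk, Matrix.cons_val, SetLike.mem_coe,
      Submodule.mem_comap, LinearMap.mulLeft_apply, mul_one]
    · exact hy
    · rw [genY_mul_genX]; exact V.sub_mem (hc q) hxy
    · rw [genY_mul_genY]; exact hc β
    · rw [← mul_assoc, genY_mul_genX, sub_mul, mul_assoc, genY_mul_genY, ← Algebra.smul_def,
        ← Algebra.commutes, ← Algebra.smul_def]
      exact V.sub_mem (V.smul_mem q hy) (V.smul_mem β hx)
  have hmul : ∀ a : FreeAlgebra k (Fin 2), ∀ w ∈ V, RingQuot.mkAlgHom k _ a * w ∈ V := by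
    intro a
    induction a using FreeAlgebra.induction with
    | grade0 c => intro w hw; rw [AlgHom.commutes, ← Algebra.smul_def]; exact V.smul_mem c hw
    | grade1 i => fin_cases i; exacts [fun w hw => hxV hw, fun w hw => hyV hw]
    | mul a b ha hb => intro w hw; rw [map_mul, mul_assoc]; exact ha _ (hb w hw)
    | add a b ha hb => intro w hw; rw [map_add, add_mul]; exact V.add_mem (ha w hw) (hb w hw)
  refine eq_top_iff.2 fun z _ => ?_
  obtain ⟨a, rfl⟩ := RingQuot.mkAlgHom_surjective k (CRel k α β q) z
  simpa using hmul a 1 h1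

instance : Module.Finite k (RingQuot (CRel k α β q)) :=
  ⟨(span_range_eq_top k α β q) ▸ Submodule.fg_span (Set.finite_range _)⟩

lemma finrank_le_four : Module.finrank k (RingQuot (CRel k α β q)) ≤ 4 := by
  have h := finrank_range_le_card (R := k)
    ![1, genX k α β q, genY k α β q, genX k α β q * genY k α β q]
  rwa [Set.finrank, span_range_eq_top, finrank_top, Fintype.card_fin] at h

variable {k α β q} {A : Type*} [Ring A] [Algebra k A]

def lift (a b : A) (ha : a * a = algebraMap k A α) (hb : b * b = algebraMap k A β)
    (hab : a * b + b * a = algebraMap k A q) : RingQuot (CRel k α β q) →ₐ[k] A :=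
  RingQuot.liftAlgHom k ⟨FreeAlgebra.lift k ![a, b], fun _ _ h => by
    cases h <;> simp [ha, hb, hab]⟩

@[simp]
lemma lift_genX (a b : A) (ha : a * a = algebraMap k A α) (hb : b * b = algebraMap k A β)
    (hab : a * b + b * a = algebraMap k A q) : lift a b ha hb hab (genX k α β q) = a := by
  simp [lift]

@[simp]
lemma lift_genY (a b : A) (ha : a * a = algebraMap k A α) (hb : b * b = algebraMap k A β)
    (hab : a * b + b * a = algebraMap k A q) : lift a b ha hb hab (genY k α β q) = b := by
  simp [lift]

lemma injective_of_surjective_of_four_le_finrank {l Y : Type*} [Field l] [Algebra k l]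
    [Ring Y] [Algebra l Y] (hY : 4 ≤ Module.finrank l Y)
    (φ : l ⊗[k] RingQuot (CRel k α β q) →ₐ[l] Y) (hφ : Function.Surjective φ) :
    Function.Injective φ := by
  have : Module.Finite l Y := Module.Finite.of_surjective φ.toLinearMap hφ
  have hle : Module.finrank l Y ≤ Module.finrank l (l ⊗[k] RingQuot (CRel k α β q)) :=
    LinearMap.finrank_le_finrank_of_surjective (f := φ.toLinearMap) hφ
  rw [Module.finrank_baseChange] at hle
  exact (LinearMap.injective_iff_surjective_of_finrank_eq_finrank (f := φ.toLinearMap)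
    (by rw [Module.finrank_baseChange]; linarith [finrank_le_four k α β q])).2 hφ

end CRel

lemma AdjoinRoot.root_X_sq_sub_C_mul_self {k : Type*} [CommRing k] (a : k) :
    root (X ^ 2 - C a) * root (X ^ 2 - C a) = algebraMap k _ a := by
  have h := eval₂_root (X ^ 2 - C a)
  rw [eval₂_sub, eval₂_pow, eval₂_X, eval₂_C, sub_eq_zero] at h
  rw [← sq, algebraMap_eq, h]

lemma finrank_eq_four_of_existsUnique {R M : Type*} [CommRing R] [Nontrivial R] [AddCommGroup M]
    [Module R M] {e₁ e₂ e₃ e₄ : M}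
    (h : ∀ w : M, ∃! c : R × R × R × R, w = c.1 • e₁ + c.2.1 • e₂ + c.2.2.1 • e₃ + c.2.2.2 • e₄) :
    Module.finrank R M = 4 := by
  let f : (R × R × R × R) →ₗ[R] M :=
    { toFun := fun c => c.1 • e₁ + c.2.1 • e₂ + c.2.2.1 • e₃ + c.2.2.2 • e₄
      map_add' := fun _ _ => by simp only [Prod.fst_add, Prod.snd_add, add_smul]; abel
      map_smul' := fun _ _ => by simp only [Prod.smul_fst, Prod.smul_snd, smul_eq_mul,
        mul_smul, RingHom.id_apply, smul_add] }
  have hf : Function.Bijective f := Function.bijective_iff_existsUnique _ |>.2 fun w => by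
    simpa only [f, LinearMap.coe_mk, AddHom.coe_mk, eq_comm] using h w
  rw [← (LinearEquiv.ofBijective f hf).finrank_eq]
  simp

section Clifford

variable {R A : Type*} [CommRing R] [Ring A] [Algebra R A] {D N : A}

lemma smul_add_mul_self_of_anticommute (hD : D * D = 1) (hN : N * N = 0)
    (hDN : D * N + N * D = 0) (r : R) :
    (r • D + N) * (r • D + N) = algebraMap R A (r * r) := by
  rw [Algebra.algebraMap_eq_smul_one, ← hD]
  simp only [add_mul, mul_add, smul_mul_assoc, mul_smul_comm, hN]
  linear_combination (norm := module) r • hDN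

lemma smul_add_mul_smul_add_smul_mul_smul_add_of_anticommute (hD : D * D = 1)
    (hDN : D * N + N * D = 0) (r : R) :
    (r • D + N) * (r • D) + (r • D) * (r • D + N) = algebraMap R A (2 * (r * r)) := by
  rw [Algebra.algebraMap_eq_smul_one, ← hD]
  simp only [add_mul, mul_add, smul_mul_assoc, mul_smul_comm]
  linear_combination (norm := module) r • hDN

end Clifford

namespace CRel

variable {k l Y : Type*} [Field k] [CommRing l] [Algebra k l] [Ring Y] [Algebra l Y]
  [Algebra k Y] [IsScalarTower k l Y] {α : k} {r : l} (hr : r * r = algebraMap k l α)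
  {D N : Y} (hD : D * D = 1) (hN : N * N = 0) (hDN : D * N + N * D = 0)

def baseChangeLift : l ⊗[k] RingQuot (CRel k α α (2 * α)) →ₐ[l] Y :=
  AlgHom.liftEquiv k l _ Y <| lift (r • D + N) (r • D)
    (by rw [IsScalarTower.algebraMap_apply k l Y, ← hr]
        exact smul_add_mul_self_of_anticommute hD hN hDN r)
    (by rw [IsScalarTower.algebraMap_apply k l Y, ← hr]
        simpa using smul_add_mul_self_of_anticommute hD (mul_zero 0) (by simp) r)
    (by rw [IsScalarTower.algebraMap_apply k l Y, map_mul, map_ofNat, ← hr]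
        exact smul_add_mul_smul_add_smul_mul_smul_add_of_anticommute hD hDN r)

@[simp]
lemma baseChangeLift_genX : baseChangeLift hr hD hN hDN (1 ⊗ₜ genX k α α (2 * α)) = r • D + N := by
  simp [baseChangeLift]

@[simp]
lemma baseChangeLift_genY : baseChangeLift hr hD hN hDN (1 ⊗ₜ genY k α α (2 * α)) = r • D := by
  simp [baseChangeLift]

lemma mem_range_baseChangeLift (hr0 : IsUnit r) :
    D ∈ (baseChangeLift hr hD hN hDN).range ∧ N ∈ (baseChangeLift hr hD hN hDN).range := by
  have hDr := (baseChangeLift hr hD hN hDN).range.smul_mem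
    ⟨_, baseChangeLift_genY hr hD hN hDN⟩ (hr0.unit⁻¹ : lˣ)
  rw [smul_smul, hr0.val_inv_mul, one_smul] at hDr
  refine ⟨hDr, ?_⟩
  have hNr := (baseChangeLift hr hD hN hDN).range.sub_mem
    ⟨_, baseChangeLift_genX hr hD hN hDN⟩ ⟨_, baseChangeLift_genY hr hD hN hDN⟩
  simpa using hNr

end CRel

section RoundTripQuiver

variable {Y : Type*} [Ring Y] {u v R S : Y}

lemma sub_mul_sub_self_eq_one (huv1 : u + v = 1) (hu : u * u = u) (hv : v * v = v)
    (huv : u * v = 0) (hvu : v * u = 0) : (u - v) * (u - v) = 1 := by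
  simp only [mul_sub, sub_mul, hu, hv, huv, hvu, sub_zero, zero_sub, sub_neg_eq_add, huv1]

lemma sub_mul_add_add_add_mul_sub_eq_zero (hRu : R * u = R) (hvR : v * R = R)
    (huR : u * R = 0) (hRv : R * v = 0) (hSv : S * v = S) (huS : u * S = S) (hvS : v * S = 0)
    (hSu : S * u = 0) : (u - v) * (R + S) + (R + S) * (u - v) = 0 := by
  simp only [mul_add, add_mul, mul_sub, sub_mul, hRu, hvR, huR, hRv, hSv, huS, hvS, hSu]
  abel

lemma eq_top_of_sub_mem_of_add_mem {l : Type*} [Field l] [Algebra l Y]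
    (h2 : (2 : l) ≠ 0) (huv1 : u + v = 1) (hvR : v * R = R) (huR : u * R = 0)
    (huS : u * S = S) (hvS : v * S = 0)
    (hspan : ∀ w : Y, ∃ c : l × l × l × l, w = c.1 • u + c.2.1 • v + c.2.2.1 • R + c.2.2.2 • S)
    {B : Subalgebra l Y} (hD : u - v ∈ B) (hN : R + S ∈ B) : B = ⊤ := by
  have hu : u ∈ B := by
    have : u = (2⁻¹ : l) • (1 + (u - v)) := by
      rw [← huv1, show u + v + (u - v) = (2 : l) • u by module, smul_smul, inv_mul_cancel₀ h2,
        one_smul]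
    rw [this]; exact B.smul_mem (B.add_mem B.one_mem hD) _
  have hv : v ∈ B := by rw [eq_sub_of_add_eq' huv1]; exact B.sub_mem B.one_mem hu
  have hR : R ∈ B := by
    rw [← hvR, ← add_zero (v * R), ← hvS, ← mul_add]; exact B.mul_mem hv hN
  have hS : S ∈ B := by
    rw [← huS, ← zero_add (u * S), ← huR, ← mul_add]; exact B.mul_mem hu hN
  refine eq_top_iff.2 fun w _ => ?_
  obtain ⟨c, rfl⟩ := hspan w
  exact B.add_mem (B.add_mem (B.add_mem (B.smul_mem hu _) (B.smul_mem hv _))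
    (B.smul_mem hR _)) (B.smul_mem hS _)

end RoundTripQuiver

/-- Let `char k ≠ 2`, `α` a non-square, `l = k(√α)`, and
`C_{2α} = k⟨x,y⟩/(x² − α, y² − α, xy + yx − 2α)`.  Then `l ⊗_k C_{2α}` is isomorphic, as an
`l`-algebra, to the truncated path algebra `lQ_{<2}` of the round-trip quiver — presented here
by vertex idempotents `u, v` and arrows `R : u → v`, `S : v → u` with all length-two paths zero
and basis `{u, v, R, S}` — via `x ↦ √α·u − √α·v + R + S` and `y ↦ √α·u − √α·v`. -/
theorem stmt18 {k : Type*} [Field k] (h2 : (2 : k) ≠ 0) (α : k) (hα : ∀ c : k, c ^ 2 ≠ α)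
    (Y : Type*) [Ring Y] [Algebra (AdjoinRoot (X ^ 2 - C α)) Y]
    (u v R S : Y)
    (huv1 : u + v = 1) (hu : u * u = u) (hv : v * v = v)
    (huv : u * v = 0) (hvu : v * u = 0)
    (hRu : R * u = R) (hvR : v * R = R) (huR : u * R = 0) (hRv : R * v = 0)
    (hSv : S * v = S) (huS : u * S = S) (hvS : v * S = 0) (hSu : S * u = 0)
    (hRR : R * R = 0) (hSS : S * S = 0) (hRS : R * S = 0) (hSR : S * R = 0)
    (hbasis : ∀ w : Y, ∃! c : AdjoinRoot (X ^ 2 - C α) × AdjoinRoot (X ^ 2 - C α) ×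
        AdjoinRoot (X ^ 2 - C α) × AdjoinRoot (X ^ 2 - C α),
        w = c.1 • u + c.2.1 • v + c.2.2.1 • R + c.2.2.2 • S) :
    ∃ e : (AdjoinRoot (X ^ 2 - C α) ⊗[k] RingQuot (CRel k α α (2 * α)))
        ≃ₐ[AdjoinRoot (X ^ 2 - C α)] Y,
      e (1 ⊗ₜ RingQuot.mkAlgHom k (CRel k α α (2 * α)) (ι k 0)) =
          AdjoinRoot.root (X ^ 2 - C α) • u - AdjoinRoot.root (X ^ 2 - C α) • v + R + S ∧
      e (1 ⊗ₜ RingQuot.mkAlgHom k (CRel k α α (2 * α)) (ι k 1)) =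
          AdjoinRoot.root (X ^ 2 - C α) • u - AdjoinRoot.root (X ^ 2 - C α) • v := by
  have : Fact (Irreducible (X ^ 2 - C α)) := ⟨X_pow_sub_C_irreducible_of_prime Nat.prime_two hα⟩
  let _ : Algebra k Y := Algebra.compHom Y (algebraMap k (AdjoinRoot (X ^ 2 - C α)))
  have : IsScalarTower k (AdjoinRoot (X ^ 2 - C α)) Y := .of_algebraMap_eq fun _ => rfl
  have hr := AdjoinRoot.root_X_sq_sub_C_mul_self α
  have hr0 : AdjoinRoot.root (X ^ 2 - C α) ≠ 0 :=
    left_ne_zero_of_mul (hr ▸ (_root_.map_ne_zero _).2 fun h => hα 0 (by simp [h]))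
  have h2' : (2 : AdjoinRoot (X ^ 2 - C α)) ≠ 0 := by
    have h := (_root_.map_ne_zero (algebraMap k (AdjoinRoot (X ^ 2 - C α)))).2 h2
    rwa [map_ofNat] at h
  have hD := sub_mul_sub_self_eq_one huv1 hu hv huv hvu
  have hN : (R + S) * (R + S) = 0 := by simp only [mul_add, add_mul, hRR, hRS, hSR, hSS, add_zero]
  have hDN := sub_mul_add_add_add_mul_sub_eq_zero hRu hvR huR hRv hSv huS hvS hSu
  let φ := CRel.baseChangeLift hr hD hN hDN
  obtain ⟨hDφ, hNφ⟩ := CRel.mem_range_baseChangeLift hr hD hN hDN hr0.isUnit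
  have hsurj : Function.Surjective φ := (AlgHom.range_eq_top _).1 <|
    eq_top_of_sub_mem_of_add_mem h2' huv1 hvR huR huS hvS (fun w => (hbasis w).exists) hDφ hNφ
  have hinj : Function.Injective φ :=
    CRel.injective_of_surjective_of_four_le_finrank (finrank_eq_four_of_existsUnique hbasis).ge
      φ hsurj
  exact ⟨AlgEquiv.ofBijective φ ⟨hinj, hsurj⟩,
    (CRel.baseChangeLift_genX hr hD hN hDN).trans (by rw [smul_sub, add_assoc]),
    (CRel.baseChangeLift_genY hr hD hN hDN).trans (smul_sub _ _ _)⟩
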